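/- The matrices E11, E22, E33, E12, E21, E23, E32 satisfy the defining relations of the four dimensional representation of the quantum superalgebra U_q[gl(2|1)]: (i) E12 E21 - E21 E12 = diag(0, -1, 1, 0), which equals the entrywise q-bracket of E11 - E22 = diag(0, -1, 1, 0); (ii) E23 E32 + E32 E23 = diag([alpha]_q, [alpha+1]_q, [alpha]_q, [alpha+1]_q), which equals the entrywise q-bracket of E22 + E33 = diag(alpha, alpha+1, alpha, alpha+1); and (iii) for every i in {1,2,3} and every (j,k) in {(1,2),(2,1),(2,3),(3,2)}: Eii Ejk - Ejk Eii = delta(j,i) Eik - delta(i,k) Eji, where delta is the Kronecker delta (all matrices appearing on the right-hand sides are among those defined). -/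

import Mathlib

open Matrix

/-- The `q`-bracket `[x]_q = (qˣ - q⁻ˣ)/(q - q⁻¹)` for real `x` (real powers). -/
noncomputable def qBracket (q x : ℝ) : ℝ := (q ^ x - q ^ (-x)) / (q - q⁻¹)

/-- `π(E¹₁) = -e(2,2) - e(4,4)` (indices 0-based in `Fin 4`). -/
noncomputable def glE11 : Matrix (Fin 4) (Fin 4) ℝ :=
  -Matrix.single 1 1 1 - Matrix.single 3 3 1

/-- `π(E²₂) = -e(3,3) - e(4,4)`. -/
noncomputable def glE22 : Matrix (Fin 4) (Fin 4) ℝ :=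
  -Matrix.single 2 2 1 - Matrix.single 3 3 1

/-- `π(E³₃) = α e(1,1) + (α+1)(e(2,2) + e(3,3)) + (α+2) e(4,4)`. -/
noncomputable def glE33 (α : ℝ) : Matrix (Fin 4) (Fin 4) ℝ :=
  α • Matrix.single 0 0 1 + (α + 1) • (Matrix.single 1 1 1 + Matrix.single 2 2 1)
    + (α + 2) • Matrix.single 3 3 1

/-- `π(E¹₂) = -e(3,2)`. -/
noncomputable def glE12 : Matrix (Fin 4) (Fin 4) ℝ := -Matrix.single 2 1 1

/-- `π(E²₁) = -e(2,3)`. -/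
noncomputable def glE21 : Matrix (Fin 4) (Fin 4) ℝ := -Matrix.single 1 2 1

/-- `π(E²₃) = √[α]_q e(1,3) - √[α+1]_q e(2,4)`. -/
noncomputable def glE23 (q α : ℝ) : Matrix (Fin 4) (Fin 4) ℝ :=
  Real.sqrt (qBracket q α) • Matrix.single 0 2 1
    - Real.sqrt (qBracket q (α + 1)) • Matrix.single 1 3 1

/-- `π(E³₂) = √[α]_q e(3,1) - √[α+1]_q e(4,2)`. -/
noncomputable def glE32 (q α : ℝ) : Matrix (Fin 4) (Fin 4) ℝ :=
  Real.sqrt (qBracket q α) • Matrix.single 2 0 1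
    - Real.sqrt (qBracket q (α + 1)) • Matrix.single 3 1 1

/-- The generator `π(Eⁱⱼ)` indexed by the superalgebra indices `i, j ∈ {1,2,3}`:
only the seven simple generators are defined, all other values are `0`. -/
noncomputable def glE (q α : ℝ) : ℕ → ℕ → Matrix (Fin 4) (Fin 4) ℝ
  | 1, 1 => glE11
  | 2, 2 => glE22
  | 3, 3 => glE33 α
  | 1, 2 => glE12
  | 2, 1 => glE21
  | 2, 3 => glE23 q α
  | 3, 2 => glE32 q α
  | _, _ => 0

/-!
The Cartan generators `E11, E22, E33` are diagonal, and multiplying a matrix unit `e(a,b)` by a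
diagonal matrix `diag d` on the left or right scales it by `d a` or `d b`; so each relation (iii)
says that the generator `Ejk` is a combination of matrix units `e(a,b)` all of the same weight
`d a - d b = δ(j,i) - δ(i,k)`. Relations (i) and (ii) follow from `e(a,b) e(b,c) = e(a,c)`;
in (ii) one also needs `√[x]_q ^ 2 = [x]_q`, i.e. `[x]_q ≥ 0` for `x ≥ 0`, which holds because
`q ^ x - q ^ (-x)` and `q - q⁻¹` have the same sign.
-/

namespace Matrix

variable {n R : Type*} [Fintype n] [DecidableEq n] [CommSemiring R]

theorem diagonal_mul_single (d : n → R) (a b : n) (c : R) :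
    diagonal d * single a b c = d a • single a b c := by
  ext i j
  simp only [diagonal_mul, smul_apply, single, of_apply, smul_eq_mul]
  split_ifs with h
  · rw [h.1]
  · simp

theorem single_mul_diagonal (d : n → R) (a b : n) (c : R) :
    single a b c * diagonal d = d b • single a b c := by
  ext i j
  simp only [mul_diagonal, smul_apply, single, of_apply, smul_eq_mul]
  split_ifs with h
  · rw [h.2, mul_comm]
  · simp

end Matrix

section QBracket

variable {q : ℝ}

theorem qBracket_zero : qBracket q 0 = 0 := by
  simp [qBracket]

theorem qBracket_neg (x : ℝ) : qBracket q (-x) = -qBracket q x := by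
  rw [qBracket, qBracket, neg_neg, ← neg_div, neg_sub]

theorem qBracket_one (hq : q - q⁻¹ ≠ 0) : qBracket q 1 = 1 := by
  rw [qBracket, Real.rpow_one, Real.rpow_neg_one, div_self hq]

theorem sub_inv_ne_zero_of_pos (hq : 0 < q) (hq1 : q ≠ 1) : q - q⁻¹ ≠ 0 := by
  rw [sub_ne_zero]
  intro h
  have hqq : q * q = 1 := by nth_rw 2 [h]; exact mul_inv_cancel₀ hq.ne'
  rcases mul_self_eq_one_iff.mp hqq with rfl | rfl
  exacts [hq1 rfl, by norm_num at hq]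

theorem qBracket_nonneg (hq : 0 < q) {x : ℝ} (hx : 0 ≤ x) : 0 ≤ qBracket q x := by
  rcases le_total q 1 with h | h
  · have hnum : q ^ x ≤ q ^ (-x) := Real.rpow_le_rpow_of_exponent_ge hq h (by linarith)
    have hden : q ≤ q⁻¹ := le_trans h (one_le_inv₀ hq |>.mpr h)
    exact div_nonneg_of_nonpos (by linarith) (by linarith)
  · have hnum : q ^ (-x) ≤ q ^ x := Real.rpow_le_rpow_of_exponent_le h (by linarith)
    have hden : q⁻¹ ≤ q := le_trans (inv_le_one_of_one_le₀ h) h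
    exact div_nonneg (by linarith) (by linarith)

end QBracket

theorem glE11_eq_diagonal : glE11 = diagonal ![0, -1, 0, -1] := by
  rw [glE11, ← sum_single_eq_diagonal, Fin.sum_univ_four]
  simp [single_neg, sub_eq_add_neg]

theorem glE22_eq_diagonal : glE22 = diagonal ![0, 0, -1, -1] := by
  rw [glE22, ← sum_single_eq_diagonal, Fin.sum_univ_four]
  simp [single_neg, sub_eq_add_neg]

theorem glE33_eq_diagonal (α : ℝ) : glE33 α = diagonal ![α, α + 1, α + 1, α + 2] := by
  rw [glE33, ← sum_single_eq_diagonal, Fin.sum_univ_four]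
  simp only [smul_single, smul_eq_mul, mul_one, smul_add, single_add, cons_val]
  abel

theorem glE12_glE21_commutator : glE12 * glE21 - glE21 * glE12 = diagonal ![0, -1, 1, 0] := by
  rw [glE12, glE21, ← sum_single_eq_diagonal, Fin.sum_univ_four]
  simp only [single_neg, single_mul_single_same, mul_neg, mul_one, neg_neg, sub_eq_add_neg,
    cons_val, single_zero, zero_add, add_zero]
  abel

theorem glE23_glE32_anticommutator (q α : ℝ) (ha : 0 ≤ qBracket q α)
    (ha1 : 0 ≤ qBracket q (α + 1)) :
    glE23 q α * glE32 q α + glE32 q α * glE23 q α =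
      diagonal ![qBracket q α, qBracket q (α + 1), qBracket q α, qBracket q (α + 1)] := by
  rw [glE23, glE32, ← sum_single_eq_diagonal, Fin.sum_univ_four]
  simp only [smul_single, smul_eq_mul, mul_one, mul_sub, sub_mul, single_mul_single_same,
    Real.mul_self_sqrt ha, Real.mul_self_sqrt ha1, single_mul_single_of_ne, ne_eq, Fin.reduceEq,
    not_false_eq_true, sub_zero, zero_sub, sub_neg_eq_add, cons_val]
  abel

theorem glE_cartan_commutator (q α : ℝ) {i : ℕ} (hi : i ∈ ({1, 2, 3} : Set ℕ))
    {jk : ℕ × ℕ} (hjk : jk ∈ ({(1, 2), (2, 1), (2, 3), (3, 2)} : Set (ℕ × ℕ))) :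
    glE q α i i * glE q α jk.1 jk.2 - glE q α jk.1 jk.2 * glE q α i i =
      (if jk.1 = i then glE q α i jk.2 else 0) - (if i = jk.2 then glE q α jk.1 i else 0) := by
  simp only [Set.mem_insert_iff, Set.mem_singleton_iff] at hi hjk
  rcases hi with rfl | rfl | rfl <;> rcases hjk with rfl | rfl | rfl | rfl <;>
    simp only [glE, glE11_eq_diagonal, glE22_eq_diagonal, glE33_eq_diagonal, glE12, glE21, glE23,
      glE32, mul_sub, sub_mul, mul_neg, neg_mul, mul_smul_comm, smul_mul_assoc, diagonal_mul_single,
      single_mul_diagonal, cons_val, Nat.reduceEqDiff, reduceIte] <;>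
    module

/-- the matrices `E11, E22, E33, E12, E21, E23, E32` satisfy the
defining relations of the four dimensional representation of `U_q[gl(2|1)]`:
(i) `[E12, E21] = diag(0,-1,1,0)`, which is the entrywise `q`-bracket of
`E11 - E22 = diag(0,-1,1,0)`; (ii) `{E23, E32} = diag([α]_q, [α+1]_q, [α]_q, [α+1]_q)`,
the entrywise `q`-bracket of `E22 + E33 = diag(α, α+1, α, α+1)`; and (iii) the
Cartan relations `[Eii, Ejk] = δ(j,i) Eik - δ(i,k) Eji`. -/
theorem glTwoOne_representation_relations (q α : ℝ) (hq : 0 < q) (hq1 : q ≠ 1) (hα : 0 < α) :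
    (glE12 * glE21 - glE21 * glE12 = diagonal ![0, -1, 1, 0] ∧
      (diagonal ![0, -1, 1, 0] : Matrix (Fin 4) (Fin 4) ℝ)
        = diagonal (fun i => qBracket q (![0, -1, 1, 0] i)) ∧
      glE11 - glE22 = diagonal ![0, -1, 1, 0]) ∧
    (glE23 q α * glE32 q α + glE32 q α * glE23 q α =
        diagonal ![qBracket q α, qBracket q (α + 1), qBracket q α, qBracket q (α + 1)] ∧
      glE22 + glE33 α = diagonal ![α, α + 1, α, α + 1]) ∧
    (∀ i ∈ ({1, 2, 3} : Set ℕ), ∀ jk ∈ ({(1, 2), (2, 1), (2, 3), (3, 2)} : Set (ℕ × ℕ)),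
      glE q α i i * glE q α jk.1 jk.2 - glE q α jk.1 jk.2 * glE q α i i =
        (if jk.1 = i then glE q α i jk.2 else 0) - (if i = jk.2 then glE q α jk.1 i else 0)) := by
  refine ⟨⟨glE12_glE21_commutator, ?_, ?_⟩, ⟨?_, ?_⟩,
    fun i hi jk hjk ↦ glE_cartan_commutator q α hi hjk⟩
  · congr 1
    funext i
    fin_cases i <;>
      simp [qBracket_zero, qBracket_neg, qBracket_one (sub_inv_ne_zero_of_pos hq hq1)]
  · rw [glE11_eq_diagonal, glE22_eq_diagonal, diagonal_sub]
    congr 1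
    ext i
    fin_cases i <;> norm_num
  · exact glE23_glE32_anticommutator q α (qBracket_nonneg hq hα.le)
      (qBracket_nonneg hq (by linarith))
  · rw [glE22_eq_diagonal, glE33_eq_diagonal, diagonal_add]
    congr 1
    ext i
    fin_cases i <;> simp only [Fin.zero_eta, Fin.mk_one, Fin.reduceFinMk, cons_val] <;> ring
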